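/- Let X be a locally compact non-compact Hausdorff space, let H and K be Banach X-modules, let S ∈ B(H,K), and let θ : X → [1,∞) be a continuous function with θ(x) → ∞ as x → ∞ (along the filter of complements of compact sets). If there is a constant C such that ‖(ξθ)(Q) ∘ S ∘ (θ⁻¹η)(Q)‖ ≤ C·sup|ξ|·sup|η| for all ξ, η ∈ C_c(X) (i.e. θ(Q)Sθ⁻¹(Q) is a bounded operator), then S is left decay preserving. If instead there is a constant C such that ‖(ξθ⁻¹)(Q) ∘ S ∘ (θη)(Q)‖ ≤ C·sup|ξ|·sup|η| for all ξ, η ∈ C_c(X), then S is right decay preserving. -/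

import Mathlib

open ContinuousLinearMap

noncomputable section

variable {H K : Type*}

/-- `M` is the multiplier algebra of a Banach module structure on `H`: a non-degenerate
norm-closed subalgebra of `B(H)` possessing a bounded approximate unit. -/
structure IsBanachModule (H : Type*) [NormedAddCommGroup H] [NormedSpace ℂ H]
    (M : Set (H →L[ℂ] H)) : Prop where
  zero_mem : (0 : H →L[ℂ] H) ∈ M
  add_mem : ∀ {A B : H →L[ℂ] H}, A ∈ M → B ∈ M → A + B ∈ M
  smul_mem : ∀ (c : ℂ) {A : H →L[ℂ] H}, A ∈ M → c • A ∈ M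
  mul_mem : ∀ {A B : H →L[ℂ] H}, A ∈ M → B ∈ M → A.comp B ∈ M
  isClosed : IsClosed M
  nondegenerate : Dense (↑(Submodule.span ℂ {u : H | ∃ A ∈ M, ∃ v : H, u = A v}) : Set H)
  approx_unit : ∃ C : ℝ, ∀ ε > (0 : ℝ), ∀ F : Finset (H →L[ℂ] H), ↑F ⊆ M →
    ∃ J ∈ M, ‖J‖ ≤ C ∧ ∀ A ∈ F, ‖J.comp A - A‖ ≤ ε ∧ ‖A.comp J - A‖ ≤ ε

/-- A Hilbert module: a Banach module on a Hilbert space whose multiplier algebra is a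
C*-algebra of operators (i.e. is moreover closed under adjoints). -/
structure IsHilbertModule (H : Type*) [NormedAddCommGroup H] [InnerProductSpace ℂ H]
    [CompleteSpace H] (M : Set (H →L[ℂ] H)) extends IsBanachModule H M : Prop where
  star_mem : ∀ {A : H →L[ℂ] H}, A ∈ M → ContinuousLinearMap.adjoint A ∈ M

/-- `B₀ˡ(H,K)`: the closed linear span of the operators `A ∘ T` with `A` in the multiplier
algebra of `K` and `T ∈ B(H,K)` (operators left vanishing at infinity). -/
def B0l [NormedAddCommGroup H] [NormedSpace ℂ H] [NormedAddCommGroup K] [NormedSpace ℂ K]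
    (MK : Set (K →L[ℂ] K)) : Set (H →L[ℂ] K) :=
  closure (↑(Submodule.span ℂ
    {S : H →L[ℂ] K | ∃ A ∈ MK, ∃ T : H →L[ℂ] K, S = A.comp T}) : Set (H →L[ℂ] K))

/-- `B₀ʳ(H,K)`: the closed linear span of the operators `T ∘ A` with `A` in the multiplier
algebra of `H` and `T ∈ B(H,K)` (operators right vanishing at infinity). -/
def B0r [NormedAddCommGroup H] [NormedSpace ℂ H] [NormedAddCommGroup K] [NormedSpace ℂ K]
    (MH : Set (H →L[ℂ] H)) : Set (H →L[ℂ] K) :=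
  closure (↑(Submodule.span ℂ
    {S : H →L[ℂ] K | ∃ A ∈ MH, ∃ T : H →L[ℂ] K, S = T.comp A}) : Set (H →L[ℂ] K))

/-- `S ∈ B(H,K)` is left decay preserving. -/
def LeftDecayPreserving [NormedAddCommGroup H] [NormedSpace ℂ H] [NormedAddCommGroup K]
    [NormedSpace ℂ K] (MH : Set (H →L[ℂ] H)) (MK : Set (K →L[ℂ] K))
    (S : H →L[ℂ] K) : Prop :=
  ∀ A ∈ MH, S.comp A ∈ B0l MK

/-- `S ∈ B(H,K)` is right decay preserving. -/
def RightDecayPreserving [NormedAddCommGroup H] [NormedSpace ℂ H] [NormedAddCommGroup K]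
    [NormedSpace ℂ K] (MH : Set (H →L[ℂ] H)) (MK : Set (K →L[ℂ] K))
    (S : H →L[ℂ] K) : Prop :=
  ∀ A ∈ MK, A.comp S ∈ B0r MH

open scoped ZeroAtInfty

/-- A Banach `X`-module (over the topological space `X`): a Banach space `H` with a
continuous non-unital algebra morphism `φ ↦ φ(Q)` from `C₀(X)` into `B(H)` whose range
acts non-degenerately. -/
structure BanachXModule (X : Type*) [TopologicalSpace X]
    (H : Type*) [NormedAddCommGroup H] [NormedSpace ℂ H] where
  Q : C₀(X, ℂ) →ₙₐ[ℂ] (H →L[ℂ] H)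
  continuous_Q : Continuous Q
  nondegenerate : Dense
    (↑(Submodule.span ℂ {u : H | ∃ φ : C₀(X, ℂ), ∃ v : H, u = Q φ v}) : Set H)

/-- The multiplier algebra of a Banach `X`-module: the norm closure of the image of
`C₀(X)`. -/
def BanachXModule.mult {X : Type*} [TopologicalSpace X] {H : Type*} [NormedAddCommGroup H]
    [NormedSpace ℂ H] (B : BanachXModule X H) : Set (H →L[ℂ] H) :=
  closure (Set.range fun φ : C₀(X, ℂ) => B.Q φ)

/-! Multipliers are norm limits of `φ(Q)` with `φ` compactly supported and `B₀ˡ`, `B₀ʳ` are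
closed, so it suffices to treat `S φ(Q)` and `φ(Q) S`. Write `φ = θ⁻¹ η` with `η` compactly
supported. If the cutoffs `χ, χ'` equal `1` on a compact set outside of which `θ ≥ 1/δ`, then
`(χ' - χ)(Q) S φ(Q) = (ξ θ)(Q) S (θ⁻¹ η)(Q)` with `ξ = (χ' - χ) θ⁻¹` of norm at most `2δ`, so
this operator has norm `O(δ)`. As `χ'(Q) → 1` strongly along cutoffs (this is
non-degeneracy), `‖S φ(Q) - χ(Q) S φ(Q)‖ = O(δ)`, and `χ(Q) S φ(Q) ∈ B₀ˡ`. The right-hand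
case is the same computation with the roles of the two sides exchanged. -/

open Filter Topology Set

namespace ContinuousLinearMap

variable {ι E F : Type*} [NormedAddCommGroup E] [NormedSpace ℂ E]
  [NormedAddCommGroup F] [NormedSpace ℂ F] {l : Filter ι} {A : ι → E →L[ℂ] F} {B : E →L[ℂ] F}

theorem opNorm_le_of_tendsto_apply [l.NeBot] {c : ℝ} (hc : 0 ≤ c)
    (hAB : ∀ u, Tendsto (fun i => A i u) l (𝓝 (B u))) (hA : ∀ᶠ i in l, ‖A i‖ ≤ c) :
    ‖B‖ ≤ c :=
  opNorm_le_bound _ hc fun u => le_of_tendsto (hAB u).norm <| hA.mono fun _ hi =>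
    (le_opNorm _ u).trans (mul_le_mul_of_nonneg_right hi (norm_nonneg u))

theorem tendsto_apply_of_dense {M : ℝ} (hA : ∀ᶠ i in l, ‖A i‖ ≤ M) {D : Set E} (hD : Dense D)
    (hAB : ∀ v ∈ D, Tendsto (fun i => A i v) l (𝓝 (B v))) (v : E) :
    Tendsto (fun i => A i v) l (𝓝 (B v)) := by
  rw [Metric.tendsto_nhds]
  intro ε hε
  obtain ⟨r, hr, hrε⟩ := exists_pos_mul_lt hε (|M| + ‖B‖ + 1)
  obtain ⟨w, hvw, hwD⟩ := Metric.dense_iff.mp hD v r hr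
  rw [Metric.mem_ball, dist_eq_norm'] at hvw
  filter_upwards [hA, Metric.tendsto_nhds.mp (hAB w hwD) r hr] with i hiM hiw
  rw [dist_eq_norm] at hiw ⊢
  have hsplit : A i v - B v = A i (v - w) + (A i w - B w) + B (w - v) := by
    simp only [map_sub]; abel
  calc ‖A i v - B v‖ ≤ ‖A i (v - w)‖ + ‖A i w - B w‖ + ‖B (w - v)‖ := by
        rw [hsplit]; exact norm_add₃_le
    _ ≤ |M| * r + r + ‖B‖ * r := by
        gcongr
        · exact (le_opNorm _ _).trans (mul_le_mul (hiM.trans (le_abs_self M)) hvw.le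
            (norm_nonneg _) (abs_nonneg M))
        · exact (le_opNorm _ _).trans (by rw [norm_sub_rev]; gcongr)
    _ < ε := by linarith

end ContinuousLinearMap

open scoped ZeroAtInfty

namespace ZeroAtInftyContinuousMap

variable {X : Type*} [TopologicalSpace X]

theorem norm_le_of_forall_le {f : C₀(X, ℂ)} {c : ℝ} (hc : 0 ≤ c) (h : ∀ x, ‖f x‖ ≤ c) :
    ‖f‖ ≤ c := by
  rw [← norm_toBCF_eq_norm]
  exact (BoundedContinuousFunction.norm_le hc).mpr h

end ZeroAtInftyContinuousMap

theorem norm_mul_le_of_eqOn_zero {α : Type*} {a g : α → ℂ} {t : Set α} {M δ : ℝ} (hM : 0 ≤ M)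
    (hδ : 0 ≤ δ) (ha₀ : EqOn a 0 t) (ha : ∀ x, ‖a x‖ ≤ M) (hg : ∀ x ∉ t, ‖g x‖ ≤ δ) (x : α) :
    ‖a x * g x‖ ≤ M * δ := by
  by_cases hx : x ∈ t
  · simp [ha₀ hx, mul_nonneg hM hδ]
  · rw [norm_mul]
    exact mul_le_mul (ha x) (hg x hx) (norm_nonneg _) hM

section Cutoffs

variable {X : Type*} [TopologicalSpace X]

theorem exists_isCompact_forall_notMem_norm_le {g : X → ℂ}
    (hg : Tendsto g (cocompact X) (𝓝 0)) {δ : ℝ} (hδ : 0 < δ) :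
    ∃ t, IsCompact t ∧ ∀ x ∉ t, ‖g x‖ ≤ δ := by
  obtain ⟨t, ht, hts⟩ := mem_cocompact.mp (Metric.tendsto_nhds.mp hg δ hδ)
  exact ⟨t, ht, fun x hx => (dist_zero_right (g x) ▸ hts hx : ‖g x‖ < δ).le⟩

structure IsCutoff (t : Set X) (χ : C₀(X, ℂ)) : Prop where
  hasCompactSupport : HasCompactSupport χ
  norm_le_one : ∀ x, ‖χ x‖ ≤ 1
  eqOn_one : EqOn χ 1 t

theorem IsCutoff.mono {s t : Set X} {χ : C₀(X, ℂ)} (h : IsCutoff t χ) (hst : s ⊆ t) :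
    IsCutoff s χ :=
  ⟨h.hasCompactSupport, h.norm_le_one, h.eqOn_one.mono hst⟩

theorem IsCutoff.norm_sub_le_two {t : Set X} {χ χ' : C₀(X, ℂ)} (h : IsCutoff t χ)
    (h' : IsCutoff t χ') (x : X) : ‖χ' x - χ x‖ ≤ 2 :=
  (_root_.norm_sub_le _ _).trans (by linarith [h.norm_le_one x, h'.norm_le_one x])

theorem IsCutoff.eqOn_sub_zero {t : Set X} {χ χ' : C₀(X, ℂ)} (h : IsCutoff t χ)
    (h' : IsCutoff t χ') : EqOn (fun x => χ' x - χ x) 0 t := fun x hx => by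
  simp [h.eqOn_one hx, h'.eqOn_one hx]

theorem exists_isCutoff [LocallyCompactSpace X] [T2Space X] {t : Set X} (ht : IsCompact t) :
    ∃ χ, IsCutoff t χ := by
  obtain ⟨f, hf₁, -, hfc, hf01⟩ :=
    exists_continuous_one_zero_of_isCompact ht isClosed_empty (disjoint_empty t)
  have hc : HasCompactSupport fun x => (f x : ℂ) := hfc.comp_left Complex.ofReal_zero
  refine ⟨⟨⟨fun x => (f x : ℂ), by fun_prop⟩, hc.is_zero_at_infty⟩,
    ⟨hc, fun x => ?_, fun x hx => ?_⟩⟩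
  · simpa [abs_of_nonneg (hf01 x).1] using (hf01 x).2
  · simp [hf₁ hx]

variable (X) in
def cutoffs : Filter C₀(X, ℂ) :=
  ⨅ t ∈ {t : Set X | IsCompact t}, 𝓟 {χ | IsCutoff t χ}

theorem hasBasis_cutoffs : (cutoffs X).HasBasis IsCompact fun t => {χ | IsCutoff t χ} := by
  refine hasBasis_biInf_principal (fun s hs t ht => ⟨s ∪ t, hs.union ht, ?_, ?_⟩)
    ⟨∅, isCompact_empty⟩ <;> intro χ hχ
  · exact hχ.mono subset_union_left
  · exact hχ.mono subset_union_right

theorem eventually_isCutoff {t : Set X} (ht : IsCompact t) : ∀ᶠ χ in cutoffs X, IsCutoff t χ :=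
  hasBasis_cutoffs.mem_of_mem ht

instance [LocallyCompactSpace X] [T2Space X] : (cutoffs X).NeBot :=
  hasBasis_cutoffs.neBot_iff.mpr exists_isCutoff

theorem tendsto_mul_cutoffs (φ : C₀(X, ℂ)) : Tendsto (fun χ => χ * φ) (cutoffs X) (𝓝 φ) := by
  rw [Metric.tendsto_nhds]
  intro ε hε
  obtain ⟨t, ht, hφt⟩ := exists_isCompact_forall_notMem_norm_le
    (ZeroAtInftyContinuousMapClass.zero_at_infty φ) (half_pos (half_pos hε))
  filter_upwards [eventually_isCutoff ht] with χ hχ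
  rw [dist_eq_norm]
  refine lt_of_le_of_lt (ZeroAtInftyContinuousMap.norm_le_of_forall_le (by positivity)
    fun x => ?_) (by linarith : 2 * (ε / 2 / 2) < ε)
  simpa [sub_mul] using norm_mul_le_of_eqOn_zero zero_le_two (by positivity)
    (a := fun x => χ x - 1) (fun x hx => by simp [hχ.eqOn_one hx])
    (fun x => (_root_.norm_sub_le _ _).trans (by linarith [hχ.norm_le_one x, norm_one (α := ℂ)]))
    hφt x

end Cutoffs

namespace BanachXModule

variable {X E : Type*} [TopologicalSpace X] [NormedAddCommGroup E] [NormedSpace ℂ E]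
  (B : BanachXModule X E)

theorem tendsto_Q_apply_cutoffs (v : E) :
    Tendsto (fun χ => B.Q χ v) (cutoffs X) (𝓝 v) := by
  obtain ⟨M, hM₀, hM⟩ := SemilinearMapClass.bound_of_continuous B.Q B.continuous_Q
  have hbound : ∀ᶠ χ in cutoffs X, ‖B.Q χ‖ ≤ M := by
    filter_upwards [eventually_isCutoff isCompact_empty] with χ hχ
    calc ‖B.Q χ‖ ≤ M * ‖χ‖ := hM χ
      _ ≤ M * 1 := by
        gcongr
        exact ZeroAtInftyContinuousMap.norm_le_of_forall_le zero_le_one hχ.norm_le_one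
      _ = M := mul_one M
  refine ContinuousLinearMap.tendsto_apply_of_dense (B := ContinuousLinearMap.id ℂ E) hbound
    B.nondegenerate (fun v hv => ?_) v
  induction hv using Submodule.span_induction with
  | mem w hw =>
    obtain ⟨ψ, y, rfl⟩ := hw
    simpa [Function.comp_def, map_mul] using
      (((continuous_eval_const y).comp B.continuous_Q).tendsto ψ).comp (tendsto_mul_cutoffs ψ)
  | zero => simpa using tendsto_const_nhds
  | add x y _ _ hx hy => simpa using hx.add hy
  | smul a x _ hx => simpa using hx.const_smul a

variable [LocallyCompactSpace X] [T2Space X] {F : Type*} [NormedAddCommGroup F] [NormedSpace ℂ F]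

theorem forall_mem_mult_of_hasCompactSupport {P : (E →L[ℂ] E) → Prop} (hP : IsClosed {A | P A})
    (h : ∀ φ : C₀(X, ℂ), HasCompactSupport φ → P (B.Q φ)) : ∀ A ∈ B.mult, P A := by
  refine fun A hA => closure_minimal ?_ hP hA
  rintro _ ⟨φ, rfl⟩
  refine hP.mem_of_tendsto ((B.continuous_Q.tendsto φ).comp (tendsto_mul_cutoffs φ)) ?_
  filter_upwards [eventually_isCutoff isCompact_empty] with χ hχ
  exact h _ hχ.hasCompactSupport.mul_right

theorem tendsto_Q_comp_cutoffs (T : F →L[ℂ] E) {c : ℝ} (hc : 0 ≤ c)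
    (h : ∀ δ > 0, ∃ t, IsCompact t ∧ ∀ χ χ', IsCutoff t χ → IsCutoff t χ' →
      ‖(B.Q (χ' - χ)).comp T‖ ≤ c * δ) :
    Tendsto (fun χ => (B.Q χ).comp T) (cutoffs X) (𝓝 T) := by
  rw [Metric.tendsto_nhds]
  intro ε hε
  obtain ⟨δ, hδ, hcδ⟩ := exists_pos_mul_lt hε c
  obtain ⟨t, ht, hT⟩ := h δ hδ
  filter_upwards [eventually_isCutoff ht] with χ hχ
  rw [dist_eq_norm']
  refine (ContinuousLinearMap.opNorm_le_of_tendsto_apply (l := cutoffs X) (by positivity)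
    (A := fun χ' => (B.Q (χ' - χ)).comp T) (fun u => ?_) ?_).trans_lt hcδ
  · simpa [map_sub] using (B.tendsto_Q_apply_cutoffs (T u)).sub_const (B.Q χ (T u))
  · filter_upwards [eventually_isCutoff ht] with χ' hχ' using hT χ χ' hχ hχ'

theorem tendsto_comp_Q_cutoffs (T : E →L[ℂ] F) {c : ℝ} (hc : 0 ≤ c)
    (h : ∀ δ > 0, ∃ t, IsCompact t ∧ ∀ χ χ', IsCutoff t χ → IsCutoff t χ' →
      ‖T.comp (B.Q (χ' - χ))‖ ≤ c * δ) :
    Tendsto (fun χ => T.comp (B.Q χ)) (cutoffs X) (𝓝 T) := by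
  rw [Metric.tendsto_nhds]
  intro ε hε
  obtain ⟨δ, hδ, hcδ⟩ := exists_pos_mul_lt hε c
  obtain ⟨t, ht, hT⟩ := h δ hδ
  filter_upwards [eventually_isCutoff ht] with χ hχ
  rw [dist_eq_norm']
  refine (ContinuousLinearMap.opNorm_le_of_tendsto_apply (l := cutoffs X) (by positivity)
    (A := fun χ' => T.comp (B.Q (χ' - χ))) (fun u => ?_) ?_).trans_lt hcδ
  · simpa [Function.comp_def, map_sub] using
      (T.continuous.tendsto _).comp ((B.tendsto_Q_apply_cutoffs u).sub_const (B.Q χ u))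
  · filter_upwards [eventually_isCutoff ht] with χ' hχ' using hT χ χ' hχ hχ'

end BanachXModule

section Weights

variable {X E F : Type*} [TopologicalSpace X]
  [NormedAddCommGroup E] [NormedSpace ℂ E] [NormedAddCommGroup F] [NormedSpace ℂ F]

/-- The possibly unbounded operator `w₁(Q) S w₂(Q)` is bounded, tested on compactly
supported `ξ, η`. -/
def IsWeightedBounded (BH : BanachXModule X E) (BK : BanachXModule X F) (S : E →L[ℂ] F)
    (w₁ w₂ : X → ℂ) : Prop :=
  ∃ C : ℝ, ∀ ξ η Φ Ψ : C₀(X, ℂ), HasCompactSupport ⇑ξ → HasCompactSupport ⇑η →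
    (∀ x, Φ x = ξ x * w₁ x) → (∀ x, Ψ x = w₂ x * η x) →
    ‖(BK.Q Φ).comp (S.comp (BH.Q Ψ))‖ ≤ C * ‖ξ‖ * ‖η‖

variable {θ : C(X, ℝ)}

theorem exists_hasCompactSupport_eq_inv_mul (hθ : ∀ x, θ x ≠ 0) {φ : C₀(X, ℂ)}
    (hφ : HasCompactSupport φ) :
    ∃ η : C₀(X, ℂ), HasCompactSupport η ∧ ∀ x, φ x = (θ x : ℂ)⁻¹ * η x := by
  have hc : HasCompactSupport fun x => (θ x : ℂ) * φ x := hφ.mul_left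
  refine ⟨⟨⟨fun x => θ x * φ x, by fun_prop⟩, hc.is_zero_at_infty⟩, hc, fun x => ?_⟩
  have : (θ x : ℂ) ≠ 0 := mod_cast hθ x
  simp only [ZeroAtInftyContinuousMap.coe_mk]
  field_simp

theorem exists_isCompact_cutoff_sub_eq_mul (hθ₁ : ∀ x, 1 ≤ θ x)
    (hθ : Tendsto θ (cocompact X) atTop) {δ : ℝ} (hδ : 0 < δ) :
    ∃ t, IsCompact t ∧ ∀ χ χ', IsCutoff t χ → IsCutoff t χ' →
      ∃ ξ : C₀(X, ℂ), HasCompactSupport ξ ∧ ‖ξ‖ ≤ 2 * δ ∧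
        ∀ x, (χ' - χ : C₀(X, ℂ)) x = ξ x * θ x := by
  have hθ₀ : ∀ x, (θ x : ℂ) ≠ 0 := fun x =>
    Complex.ofReal_ne_zero.mpr (zero_lt_one.trans_le (hθ₁ x)).ne'
  have hinv : Tendsto (fun x => (θ x : ℂ)⁻¹) (cocompact X) (𝓝 0) := by
    simpa [Function.comp_def] using
      (Complex.continuous_ofReal.tendsto 0).comp (tendsto_inv_atTop_zero.comp hθ)
  obtain ⟨t, ht, hθt⟩ := exists_isCompact_forall_notMem_norm_le hinv hδ
  refine ⟨t, ht, fun χ χ' hχ hχ' => ?_⟩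
  have hc : HasCompactSupport fun x => (χ' x - χ x) * (θ x : ℂ)⁻¹ :=
    (hχ'.hasCompactSupport.sub hχ.hasCompactSupport).mul_right
  refine ⟨⟨⟨fun x => (χ' x - χ x) * (θ x : ℂ)⁻¹,
    (χ'.continuous.sub χ.continuous).mul (Continuous.inv₀ (by fun_prop) hθ₀)⟩,
    hc.is_zero_at_infty⟩, hc, ?_, fun x => ?_⟩
  · exact ZeroAtInftyContinuousMap.norm_le_of_forall_le (by positivity)
      (norm_mul_le_of_eqOn_zero zero_le_two hδ.le (hχ.eqOn_sub_zero hχ')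
        (hχ.norm_sub_le_two hχ') hθt)
  · have := hθ₀ x
    simp only [ZeroAtInftyContinuousMap.coe_sub, Pi.sub_apply, ZeroAtInftyContinuousMap.coe_mk]
    field_simp

end Weights

section DecayPreserving

variable {X E F : Type*} [TopologicalSpace X] [LocallyCompactSpace X] [T2Space X]
  [NormedAddCommGroup E] [NormedSpace ℂ E] [NormedAddCommGroup F] [NormedSpace ℂ F]
  {BH : BanachXModule X E} {BK : BanachXModule X F} {S : E →L[ℂ] F} {θ : C(X, ℝ)}

theorem comp_Q_mem_B0l (hθ₁ : ∀ x, 1 ≤ θ x) (hθ : Tendsto θ (cocompact X) atTop)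
    (hS : IsWeightedBounded BH BK S (fun x => (θ x : ℂ)) fun x => (θ x : ℂ)⁻¹)
    {φ : C₀(X, ℂ)} (hφ : HasCompactSupport φ) : S.comp (BH.Q φ) ∈ B0l BK.mult := by
  obtain ⟨C, hC⟩ := hS
  obtain ⟨η, hη, hφη⟩ :=
    exists_hasCompactSupport_eq_inv_mul (fun x => (zero_lt_one.trans_le (hθ₁ x)).ne') hφ
  refine mem_closure_of_tendsto (BK.tendsto_Q_comp_cutoffs _ (c := 2 * |C| * ‖η‖)
    (by positivity) fun δ hδ => ?_)
    (Eventually.of_forall fun χ => Submodule.subset_span ⟨BK.Q χ, subset_closure ⟨χ, rfl⟩, _, rfl⟩)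
  obtain ⟨t, ht, hcut⟩ := exists_isCompact_cutoff_sub_eq_mul hθ₁ hθ hδ
  refine ⟨t, ht, fun χ χ' hχ hχ' => ?_⟩
  obtain ⟨ξ, hξ, hξδ, hξθ⟩ := hcut χ χ' hχ hχ'
  calc _ ≤ C * ‖ξ‖ * ‖η‖ := hC ξ η _ φ hξ hη hξθ hφη
    _ ≤ |C| * (2 * δ) * ‖η‖ := by gcongr; exact le_abs_self C
    _ = 2 * |C| * ‖η‖ * δ := by ring

theorem Q_comp_mem_B0r (hθ₁ : ∀ x, 1 ≤ θ x) (hθ : Tendsto θ (cocompact X) atTop)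
    (hS : IsWeightedBounded BH BK S (fun x => (θ x : ℂ)⁻¹) fun x => (θ x : ℂ))
    {φ : C₀(X, ℂ)} (hφ : HasCompactSupport φ) : (BK.Q φ).comp S ∈ B0r BH.mult := by
  obtain ⟨C, hC⟩ := hS
  obtain ⟨ξ, hξ, hφξ⟩ :=
    exists_hasCompactSupport_eq_inv_mul (fun x => (zero_lt_one.trans_le (hθ₁ x)).ne') hφ
  refine mem_closure_of_tendsto (BH.tendsto_comp_Q_cutoffs _ (c := 2 * |C| * ‖ξ‖)
    (by positivity) fun δ hδ => ?_)
    (Eventually.of_forall fun χ => Submodule.subset_span ⟨BH.Q χ, subset_closure ⟨χ, rfl⟩, _, rfl⟩)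
  obtain ⟨t, ht, hcut⟩ := exists_isCompact_cutoff_sub_eq_mul hθ₁ hθ hδ
  refine ⟨t, ht, fun χ χ' hχ hχ' => ?_⟩
  obtain ⟨η, hη, hηδ, hηθ⟩ := hcut χ χ' hχ hχ'
  calc _ ≤ C * ‖ξ‖ * ‖η‖ := hC ξ η φ _ hξ hη (fun x => (hφξ x).trans (mul_comm _ _))
        fun x => (hηθ x).trans (mul_comm _ _)
    _ ≤ |C| * ‖ξ‖ * (2 * δ) := by gcongr; exact le_abs_self C
    _ = 2 * |C| * ‖ξ‖ * δ := by ring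

end DecayPreserving

theorem stmt2 {X : Type*} [TopologicalSpace X] [LocallyCompactSpace X] [T2Space X]
    {H K : Type*} [NormedAddCommGroup H] [NormedSpace ℂ H]
    [NormedAddCommGroup K] [NormedSpace ℂ K]
    (BH : BanachXModule X H) (BK : BanachXModule X K)
    (S : H →L[ℂ] K) (θ : C(X, ℝ)) (hθ1 : ∀ x, 1 ≤ θ x)
    (hθinf : Filter.Tendsto ⇑θ (Filter.cocompact X) Filter.atTop) :
    ((∃ C : ℝ, ∀ ξ η Φ Ψ : C₀(X, ℂ), HasCompactSupport ⇑ξ → HasCompactSupport ⇑η →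
        (∀ x, Φ x = ξ x * (θ x : ℂ)) → (∀ x, Ψ x = (θ x : ℂ)⁻¹ * η x) →
        ‖(BK.Q Φ).comp (S.comp (BH.Q Ψ))‖ ≤ C * ‖ξ‖ * ‖η‖) →
      LeftDecayPreserving BH.mult BK.mult S) ∧
    ((∃ C : ℝ, ∀ ξ η Φ Ψ : C₀(X, ℂ), HasCompactSupport ⇑ξ → HasCompactSupport ⇑η →
        (∀ x, Φ x = ξ x * (θ x : ℂ)⁻¹) → (∀ x, Ψ x = (θ x : ℂ) * η x) →
        ‖(BK.Q Φ).comp (S.comp (BH.Q Ψ))‖ ≤ C * ‖ξ‖ * ‖η‖) →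
      RightDecayPreserving BH.mult BK.mult S) := by
  refine ⟨fun hS => ?_, fun hS => ?_⟩
  · exact BH.forall_mem_mult_of_hasCompactSupport
      (isClosed_closure.preimage (continuous_const.clm_comp continuous_id))
      fun φ hφ => comp_Q_mem_B0l hθ1 hθinf hS hφ
  · exact BK.forall_mem_mult_of_hasCompactSupport
      (isClosed_closure.preimage (continuous_id.clm_comp continuous_const))
      fun φ hφ => Q_comp_mem_B0r hθ1 hθinf hS hφ

end
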